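/- Let g : [0, ΔT] → ℝ^n be C^s with ‖g^{(j)}(t)‖ ≤ M_j for all t ∈ [0,ΔT] and 0 ≤ j ≤ s. Let t_1 < ... < t_s be points in [0,ΔT] and G = [g(t_1) ... g(t_s)] ∈ ℝ^{n×s}. Then for each j = 1,...,s−1 there exists a constant c (depending only on s and the interpolation nodes, not on g or ΔT) such that the (j+1)-th singular value of G satisfies σ_{j+1}(G) ≤ c √(s−j) M_j (ΔT)^j. -/

import Mathlib

/-- The spectral norm (largest singular value) of a real matrix,
realized as the operator norm of the induced map between Euclidean spaces. -/
noncomputable def matrixSpectralNorm {m n : ℕ} (A : Matrix (Fin m) (Fin n) ℝ) : ℝ :=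
  ‖LinearMap.toContinuousLinearMap (Matrix.toEuclideanLin A)‖

/-- `singularValue A k` is the `(k+1)`-th largest singular value of `A`
(`k` is 0-indexed, so `singularValue A 0 = σ_1` is the largest one):
the square roots of the eigenvalues of `Aᴴ * A`, sorted in decreasing order. -/
noncomputable def singularValue {m n : ℕ} (A : Matrix (Fin m) (Fin n) ℝ) (k : Fin n) : ℝ :=
  Real.sqrt ((Matrix.isHermitian_conjTranspose_mul_self A).eigenvalues
    (Tuple.sort (Matrix.isHermitian_conjTranspose_mul_self A).eigenvalues k.rev))

/-!
Subtract from every sample `g(t_k)` the Taylor polynomial of degree `j - 1` of `g` at `0`.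
The matrix `P` of these polynomial samples has rank at most `j`, its columns lying in the span of
the `j` Taylor coefficients, while by Taylor's theorem every column of `G - P` has norm at most
`M_j ΔT^j`, so `‖G - P‖ ≤ √s M_j ΔT^j`. On `ker P`, a subspace of codimension at most `j`,
`G` agrees with `G - P`, and the Courant–Fischer min-max principle for `Gᵀ G` turns this into
`σ_{j+1}(G) ≤ √s M_j ΔT^j`; hence `c = √s` works.
-/

open Module Submodule
open scoped InnerProductSpace Matrix

namespace Matrix

theorem rank_eq_finrank_range_toEuclideanLin {𝕜 : Type*} [RCLike 𝕜] {m n : Type*} [Fintype m]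
    [Fintype n] [DecidableEq n] (A : Matrix m n 𝕜) :
    A.rank = finrank 𝕜 (LinearMap.range (toEuclideanLin A)) :=
  rank_eq_finrank_range_toLin A (EuclideanSpace.basisFun m 𝕜).toBasis
    (EuclideanSpace.basisFun n 𝕜).toBasis

namespace IsHermitian

variable {ι : Type*} [Fintype ι] [DecidableEq ι] {A : Matrix ι ι ℝ} (hA : A.IsHermitian)

theorem eigenvectorBasis_repr_toEuclideanLin (x : EuclideanSpace ℝ ι) (i : ι) :
    hA.eigenvectorBasis.repr (toEuclideanLin A x) i =
      hA.eigenvalues i * hA.eigenvectorBasis.repr x i := by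
  have hb :
      toEuclideanLin A (hA.eigenvectorBasis i) = hA.eigenvalues i • hA.eigenvectorBasis i :=
    (WithLp.equiv 2 (ι → ℝ)).injective <| by
      simpa [toLpLin_apply] using hA.mulVec_eigenvectorBasis i
  rw [OrthonormalBasis.repr_apply_apply, OrthonormalBasis.repr_apply_apply,
    ← isSymmetric_toEuclideanLin_iff.mpr hA, hb, real_inner_smul_left]

theorem inner_toEuclideanLin_eq_sum (x : EuclideanSpace ℝ ι) :
    ⟪x, toEuclideanLin A x⟫_ℝ =
      ∑ i, hA.eigenvalues i * hA.eigenvectorBasis.repr x i ^ 2 := by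
  rw [← hA.eigenvectorBasis.repr.inner_map_map, PiLp.inner_apply]
  refine Finset.sum_congr rfl fun i _ => ?_
  rw [eigenvectorBasis_repr_toEuclideanLin, RCLike.inner_apply, conj_trivial]
  ring

theorem mul_norm_sq_le_inner_toEuclideanLin {μ : ℝ} {x : EuclideanSpace ℝ ι}
    (hx : x ∈ span ℝ (hA.eigenvectorBasis '' {i | μ ≤ hA.eigenvalues i})) :
    μ * ‖x‖ ^ 2 ≤ ⟪x, toEuclideanLin A x⟫_ℝ := by
  have hcoord : ∀ i, hA.eigenvalues i < μ → hA.eigenvectorBasis.repr x i = 0 := by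
    intro i hi
    have hle : span ℝ (hA.eigenvectorBasis '' {i | μ ≤ hA.eigenvalues i}) ≤
        (ℝ ∙ hA.eigenvectorBasis i)ᗮ := by
      refine span_le.mpr ?_
      rintro _ ⟨l, hl, rfl⟩
      refine mem_orthogonal_singleton_iff_inner_right.mpr
        (hA.eigenvectorBasis.orthonormal.2 ?_)
      rintro rfl
      exact (not_le.mpr hi) hl
    rw [hA.eigenvectorBasis.repr_apply_apply]
    exact mem_orthogonal_singleton_iff_inner_right.mp (hle hx)
  rw [hA.inner_toEuclideanLin_eq_sum, ← hA.eigenvectorBasis.repr.norm_map,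
    EuclideanSpace.real_norm_sq_eq, Finset.mul_sum]
  refine Finset.sum_le_sum fun i _ => ?_
  rcases lt_or_ge (hA.eigenvalues i) μ with hi | hi
  · simp [hcoord i hi]
  · exact mul_le_mul_of_nonneg_right hi (sq_nonneg _)

end IsHermitian

/-- Courant–Fischer, upper half. The eigenvalue on the left is the `(k+1)`-th largest one. -/
theorem IsHermitian.eigenvalues_sort_rev_le {s : ℕ} {A : Matrix (Fin s) (Fin s) ℝ}
    (hA : A.IsHermitian) (k : Fin s) {W : Submodule ℝ (EuclideanSpace ℝ (Fin s))}
    (hW : s - k ≤ finrank ℝ W) {c : ℝ}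
    (hc : ∀ x ∈ W, ⟪x, toEuclideanLin A x⟫_ℝ ≤ c * ‖x‖ ^ 2) :
    hA.eigenvalues (Tuple.sort hA.eigenvalues k.rev) ≤ c := by
  set σ := Tuple.sort hA.eigenvalues
  set μ := hA.eigenvalues (σ k.rev)
  set U := span ℝ (Set.range fun i : Set.Ici k.rev => hA.eigenvectorBasis (σ i))
  have hU : finrank ℝ U = k + 1 := by
    have hli : LinearIndependent ℝ fun i : Set.Ici k.rev => hA.eigenvectorBasis (σ i) :=
      hA.eigenvectorBasis.orthonormal.linearIndependent.comp _
        (σ.injective.comp Subtype.val_injective)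
    rw [finrank_span_eq_card hli, Fintype.card_Ici, Fin.card_Ici, Fin.val_rev]
    omega
  have hUμ : U ≤ span ℝ (hA.eigenvectorBasis '' {i | μ ≤ hA.eigenvalues i}) := by
    refine span_mono ?_
    rintro _ ⟨i, rfl⟩
    exact ⟨σ i, Tuple.monotone_sort hA.eigenvalues i.2, rfl⟩
  have hUW : ¬Disjoint U W := fun h => by
    have := finrank_add_finrank_le_of_disjoint h
    rw [hU, finrank_euclideanSpace_fin] at this
    omega
  obtain ⟨x, hxU, hxW, hx0⟩ : ∃ x ∈ U, x ∈ W ∧ x ≠ 0 := by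
    simpa [disjoint_def] using hUW
  have hpos : 0 < ‖x‖ ^ 2 := by positivity
  have := (hA.mul_norm_sq_le_inner_toEuclideanLin (hUμ hxU)).trans (hc x hxW)
  exact le_of_mul_le_mul_right this hpos

end Matrix

theorem singularValue_le_of_finrank_le {m n : ℕ} (A : Matrix (Fin m) (Fin n) ℝ) (k : Fin n)
    {W : Submodule ℝ (EuclideanSpace ℝ (Fin n))} (hW : n - k ≤ finrank ℝ W) {c : ℝ}
    (hc0 : 0 ≤ c) (hc : ∀ x ∈ W, ‖Matrix.toEuclideanLin A x‖ ≤ c * ‖x‖) :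
    singularValue A k ≤ c := by
  refine Real.sqrt_le_iff.mpr ⟨hc0, ?_⟩
  refine (Matrix.isHermitian_conjTranspose_mul_self A).eigenvalues_sort_rev_le k hW
    fun x hx => ?_
  have hAA :
      ⟪x, Matrix.toEuclideanLin (Aᴴ * A) x⟫_ℝ = ‖Matrix.toEuclideanLin A x‖ ^ 2 := by
    rw [Matrix.toLpLin_mul_same, LinearMap.comp_apply,
      Matrix.toEuclideanLin_conjTranspose_eq_adjoint, LinearMap.adjoint_inner_right,
      real_inner_self_eq_norm_sq]
  rw [hAA, ← mul_pow]
  exact pow_le_pow_left₀ (norm_nonneg _) (hc x hx) 2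

theorem singularValue_le_of_rank_le {m n : ℕ} (A B : Matrix (Fin m) (Fin n) ℝ) (k : Fin n)
    (hB : B.rank ≤ k) {c : ℝ} (hc0 : 0 ≤ c)
    (hc : ∀ x, ‖Matrix.toEuclideanLin (A - B) x‖ ≤ c * ‖x‖) :
    singularValue A k ≤ c := by
  refine singularValue_le_of_finrank_le A k (W := LinearMap.ker (Matrix.toEuclideanLin B)) ?_ hc0
    fun x hx => ?_
  · have := LinearMap.finrank_range_add_finrank_ker (Matrix.toEuclideanLin B)
    rw [← Matrix.rank_eq_finrank_range_toEuclideanLin, finrank_euclideanSpace_fin] at this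
    omega
  · simpa [LinearMap.mem_ker.mp hx] using hc x

theorem EuclideanSpace.sum_norm_le_sqrt_card_mul_norm {κ : Type*} [Fintype κ]
    (x : EuclideanSpace ℝ κ) : ∑ k, ‖x k‖ ≤ √(Fintype.card κ) * ‖x‖ := by
  have h := sq_sum_le_card_mul_sum_sq (s := Finset.univ) (f := fun k => ‖x k‖)
  rw [← EuclideanSpace.norm_sq_eq, Finset.card_univ] at h
  rw [← Real.sqrt_sq (norm_nonneg x), ← Real.sqrt_mul (Nat.cast_nonneg _)]
  exact Real.le_sqrt_of_sq_le h

def sampleMatrix {ι κ : Type*} (v : κ → EuclideanSpace ℝ ι) : Matrix ι κ ℝ :=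
  Matrix.of fun i k => v k i

theorem sampleMatrix_sub {ι κ : Type*} (v w : κ → EuclideanSpace ℝ ι) :
    sampleMatrix v - sampleMatrix w = sampleMatrix (v - w) :=
  rfl

section sampleMatrix

variable {ι κ : Type*} [Fintype κ] [DecidableEq κ]

theorem toEuclideanLin_sampleMatrix (v : κ → EuclideanSpace ℝ ι) (x : EuclideanSpace ℝ κ) :
    Matrix.toEuclideanLin (sampleMatrix v) x = ∑ k, x k • v k := by
  ext i
  simp [sampleMatrix, Matrix.toLpLin_apply, Matrix.mulVec, dotProduct, mul_comm]

theorem rank_sampleMatrix_le [Fintype ι] {v : κ → EuclideanSpace ℝ ι}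
    {S : Submodule ℝ (EuclideanSpace ℝ ι)} (hv : ∀ k, v k ∈ S) :
    (sampleMatrix v).rank ≤ finrank ℝ S := by
  rw [Matrix.rank_eq_finrank_range_toEuclideanLin]
  refine Submodule.finrank_mono ?_
  rintro _ ⟨x, rfl⟩
  rw [toEuclideanLin_sampleMatrix]
  exact S.sum_mem fun k _ => S.smul_mem _ (hv k)

theorem norm_toEuclideanLin_sampleMatrix_le [Fintype ι] {v : κ → EuclideanSpace ℝ ι}
    {b : ℝ} (hb : 0 ≤ b) (hv : ∀ k, ‖v k‖ ≤ b) (x : EuclideanSpace ℝ κ) :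
    ‖Matrix.toEuclideanLin (sampleMatrix v) x‖ ≤ √(Fintype.card κ) * b * ‖x‖ := by
  rw [toEuclideanLin_sampleMatrix]
  calc ‖∑ k, x k • v k‖ ≤ ∑ k, ‖x k‖ * b :=
        norm_sum_le_of_le _ fun k _ => (norm_smul_le _ _).trans (by gcongr; exact hv k)
    _ = b * ∑ k, ‖x k‖ := by rw [← Finset.sum_mul, mul_comm]
    _ ≤ √(Fintype.card κ) * b * ‖x‖ := by
        rw [mul_comm _ b, mul_assoc]
        exact mul_le_mul_of_nonneg_left (EuclideanSpace.sum_norm_le_sqrt_card_mul_norm x) hb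

end sampleMatrix

theorem taylorWithinEval_mem_span {E : Type*} [NormedAddCommGroup E] [NormedSpace ℝ E]
    (f : ℝ → E) (n : ℕ) (s : Set ℝ) (x₀ x : ℝ) :
    taylorWithinEval f n s x₀ x ∈
      span ℝ (Set.range fun l : Fin (n + 1) => iteratedDerivWithin l f s x₀) := by
  rw [taylor_within_apply, ← Fin.sum_univ_eq_sum_range]
  exact sum_mem fun l _ => smul_mem _ _ (subset_span ⟨l, rfl⟩)

theorem norm_sub_taylorWithinEval_le {E : Type*} [NormedAddCommGroup E] [NormedSpace ℝ E]
    {f : ℝ → E} {a b C x : ℝ} {n : ℕ} (hf : ContDiffOn ℝ (n + 1) f (Set.Icc a b))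
    (hC : ∀ y ∈ Set.Icc a b, ‖iteratedDerivWithin (n + 1) f (Set.Icc a b) y‖ ≤ C)
    (hx : x ∈ Set.Icc a b) :
    ‖f x - taylorWithinEval f n (Set.Icc a b) a x‖ ≤ C * (b - a) ^ (n + 1) := by
  have hC0 : 0 ≤ C := (norm_nonneg _).trans (hC x hx)
  refine (taylor_mean_remainder_bound (hx.1.trans hx.2) hf hx hC).trans ?_
  calc C * (x - a) ^ (n + 1) / n.factorial ≤ C * (x - a) ^ (n + 1) :=
        div_le_self (by have := sub_nonneg.mpr hx.1; positivity)
          (by exact_mod_cast n.factorial_pos)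
    _ ≤ C * (b - a) ^ (n + 1) := by gcongr; exacts [sub_nonneg.mpr hx.1, hx.2]

/-- Theorem 1 of the paper: let `g : [0, ΔT] → ℝ^n` be `C^s` with
`‖g^{(i)}(t)‖ ≤ M_i` for all `t ∈ [0,ΔT]` and `0 ≤ i ≤ s`. Let `t_1 < ... < t_s` be points in
`[0,ΔT]` (given as fixed relative positions `θ_k ∈ [0,1]`, so that `t_k = ΔT·θ_k`), and
`G = [g(t_1) ... g(t_s)] ∈ ℝ^{n×s}` the sample matrix. Then for each `j = 1,...,s−1`
there is a constant `c > 0` depending only on `s`, `j` and the interpolation nodes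
(not on `g`, `n`, `M` or `ΔT`) such that the `(j+1)`-th singular value of `G` satisfies
`σ_{j+1}(G) ≤ c √(s−j) M_j (ΔT)^j`. -/
theorem stmt11 (s j : ℕ) (hj1 : 1 ≤ j) (hj2 : j ≤ s - 1)
    (θ : Fin s → ℝ) (hθmem : ∀ k, θ k ∈ Set.Icc (0 : ℝ) 1) :
    ∃ c : ℝ, 0 < c ∧
      ∀ (n : ℕ) (ΔT : ℝ), 0 < ΔT →
        ∀ (g : ℝ → EuclideanSpace ℝ (Fin n)) (M : ℕ → ℝ),
          ContDiffOn ℝ s g (Set.Icc 0 ΔT) →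
          (∀ i ≤ s, ∀ t ∈ Set.Icc (0 : ℝ) ΔT,
            ‖iteratedDerivWithin i g (Set.Icc 0 ΔT) t‖ ≤ M i) →
          singularValue (Matrix.of fun (i : Fin n) (k : Fin s) => g (ΔT * θ k) i)
              ⟨j, by omega⟩
            ≤ c * Real.sqrt (s - j : ℕ) * M j * ΔT ^ j := by
  refine ⟨√s, Real.sqrt_pos.mpr (by exact_mod_cast (by omega : 0 < s)),
    fun n ΔT hΔT g M hg hM => ?_⟩
  obtain ⟨m, rfl⟩ : ∃ m, j = m + 1 := ⟨j - 1, by omega⟩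
  have ht : ∀ k, ΔT * θ k ∈ Set.Icc 0 ΔT := fun k =>
    ⟨mul_nonneg hΔT.le (hθmem k).1, mul_le_of_le_one_right hΔT.le (hθmem k).2⟩
  set B := M (m + 1) * ΔT ^ (m + 1)
  have hB : 0 ≤ B :=
    mul_nonneg ((norm_nonneg _).trans (hM _ (by omega) _ (ht ⟨0, by omega⟩))) (by positivity)
  set v : Fin s → EuclideanSpace ℝ (Fin n) := fun k => g (ΔT * θ k)
  set p : Fin s → EuclideanSpace ℝ (Fin n) :=
    fun k => taylorWithinEval g m (Set.Icc 0 ΔT) 0 (ΔT * θ k)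
  have hrank : (sampleMatrix p).rank ≤ m + 1 :=
    (rank_sampleMatrix_le fun k => taylorWithinEval_mem_span g m _ 0 (ΔT * θ k)).trans
      ((finrank_range_le_card _).trans_eq (Fintype.card_fin _))
  have hcol : ∀ k, ‖v k - p k‖ ≤ B := fun k => by
    simpa using norm_sub_taylorWithinEval_le (hg.of_le (by exact_mod_cast hj2.trans (by omega)))
      (fun y hy => hM _ (by omega) y hy) (ht k)
  calc singularValue (sampleMatrix v) _ ≤ √(Fintype.card (Fin s)) * B :=
        singularValue_le_of_rank_le _ (sampleMatrix p) _ hrank (by positivity) fun x => by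
          rw [sampleMatrix_sub]
          exact norm_toEuclideanLin_sampleMatrix_le hB hcol x
    _ ≤ √s * √(s - (m + 1) : ℕ) * M (m + 1) * ΔT ^ (m + 1) := by
      rw [Fintype.card_fin, mul_assoc _ _ (M _), mul_assoc, mul_assoc]
      refine mul_le_mul_of_nonneg_left (le_mul_of_one_le_left hB ?_) (Real.sqrt_nonneg _)
      exact Real.one_le_sqrt.mpr (by exact_mod_cast (by omega : 1 ≤ s - (m + 1)))
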